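/- Let K = (G, M, I) be a formal context with G finite and let R ⊆ G be arbitrary. Then there exists a complete representative system 𝒮 of R-mixed generators of K which has the semi-downset property: for every S ∈ 𝒮 and every T ⊆ R, the set S \ T belongs to 𝒮. -/

import Mathlib

/-!
Fix a linear order on `G`. For each extent `A`, take the colex-least finite set `S` with
`S'' = A` that contains `A \ R`. Given `S'' = A`, condition (ii) of an `R`-mixed generator says
exactly `A \ R ⊆ S`, and condition (i) holds because deleting a redundant element of `R` would give
a colex-smaller candidate. For the semi-downset property let
`U = S \ T` with `T ⊆ R`. If some candidate `X` for `U''` were colex-smaller than `U`, then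
`X ∪ (S ∩ T)` would be a candidate for `A` colex-smaller than `U ∪ (S ∩ T) = S`.
-/

/-- Derivation of a set of objects: the attributes shared by all of them. -/
def intentOf {G M : Type*} (I : G → M → Prop) (S : Set G) : Set M :=
  {n | ∀ g ∈ S, I g n}

/-- Derivation of a set of attributes: the objects having all of them. -/
def extentOf {G M : Type*} (I : G → M → Prop) (B : Set M) : Set G :=
  {g | ∀ n ∈ B, I g n}

/-- Double derivation (closure) of a set of objects. -/
def cl {G M : Type*} (I : G → M → Prop) (S : Set G) : Set G :=
  extentOf I (intentOf I S)

/-- A set of objects is an extent if it is closed under double derivation. -/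
def IsExtent {G M : Type*} (I : G → M → Prop) (S : Set G) : Prop :=
  cl I S = S

/-- The number of concepts of the context equals its number of extents. -/
noncomputable def numConcepts {G M : Type*} (I : G → M → Prop) : ℕ :=
  {S : Set G | IsExtent I S}.ncard

/-- The context op^{g,m}(K): fill the row of `g` except at `m`,
and fill the column of `m` except at `g`. -/
def opRel {G M : Type*} (I : G → M → Prop) (g : G) (m : M) : G → M → Prop :=
  fun h n => I h n ∨ (h = g ∧ n ≠ m) ∨ (h ≠ g ∧ n = m)

/-- `S` is an `R`-mixed generator. -/
def MixGen {G M : Type*} (I : G → M → Prop) (R S : Set G) : Prop :=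
  ∀ g : G, (g ∈ S ∩ R → cl I (S \ {g}) ≠ cl I S) ∧
    (g ∉ S ∪ R → cl I (S ∪ {g}) ≠ cl I S)

/-- `S` strongly avoids `h` (with respect to the attribute `m`):
`S' ∩ (hᶜ \ {m}) ≠ ∅`. -/
def StronglyAvoids {G M : Type*} (I : G → M → Prop) (m : M) (S : Set G) (h : G) : Prop :=
  ∃ n, n ∈ intentOf I S ∧ ¬ I h n ∧ n ≠ m

/-- `χ(S)`: the set of objects of `R = G \ m'` strongly avoided by `S`. -/
def chi {G M : Type*} (I : G → M → Prop) (m : M) (S : Set G) : Set G :=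
  {h | ¬ I h m ∧ StronglyAvoids I m S h}

open Finset Colex

section Closure

variable {G M : Type*} (I : G → M → Prop)

theorem cl_eq_extentClosure (S : Set G) : cl I S = extentClosure I S := rfl

theorem subset_cl (S : Set G) : S ⊆ cl I S := (extentClosure I).le_closure S

theorem cl_mono : Monotone (cl I) := (extentClosure I).monotone

theorem cl_union_congr_left {S S' : Set G} (h : cl I S = cl I S') (W : Set G) :
    cl I (S ∪ W) = cl I (S' ∪ W) := by
  simp only [cl_eq_extentClosure] at h ⊢
  have hS := (extentClosure I).closure_sup_closure_left S W
  rw [h] at hS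
  exact hS.symm.trans ((extentClosure I).closure_sup_closure_left S' W)

end Closure

theorem Finset.Colex.toColex_union_lt_toColex_union {α : Type*} [LinearOrder α]
    {t u w : Finset α} (h : toColex t < toColex u) (hu : Disjoint u w) :
    toColex (t ∪ w) < toColex (u ∪ w) := by
  rw [← toColex_sdiff_lt_toColex_sdiff subset_union_right subset_union_right, union_sdiff_right,
    union_sdiff_right, hu.sdiff_eq_left]
  exact (toColex_mono sdiff_subset).trans_lt h

section ColexMinGen

variable {G M : Type*} (I : G → M → Prop) [LinearOrder G]

def IsColexMinGen (R : Set G) (s : Finset G) : Prop :=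
  cl I s \ R ⊆ s ∧
    ∀ t : Finset G, cl I t = cl I s → cl I s \ R ⊆ t → toColex s ≤ toColex t

variable {I} {R : Set G} {s : Finset G}

theorem IsColexMinGen.mixGen (hs : IsColexMinGen I R s) : MixGen I R s := by
  intro g
  constructor
  · rintro ⟨hgs, hgR⟩ hcl
    have hle := hs.2 (s.erase g) (by rwa [coe_erase])
      (fun x hx => mem_erase.2 ⟨fun hxg => hx.2 (hxg ▸ hgR), hs.1 hx⟩)
    exact hle.not_gt (toColex_lt_toColex_of_ssubset (erase_ssubset hgs))
  · intro hg hcl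
    have hgcl : g ∈ cl I s := hcl ▸ subset_cl I _ (Set.mem_union_right _ rfl)
    exact hg (Or.inl (hs.1 ⟨hgcl, fun hgR => hg (Or.inr hgR)⟩))

theorem IsColexMinGen.eq_of_cl_eq {t : Finset G} (hs : IsColexMinGen I R s)
    (ht : IsColexMinGen I R t) (h : cl I s = cl I t) : s = t :=
  toColex_inj.1 <| le_antisymm (hs.2 t h.symm (h ▸ ht.1)) (ht.2 s h (h ▸ hs.1))

theorem exists_isColexMinGen [Finite G] (R : Set G) {A : Set G} (hA : IsExtent I A) :
    ∃ s, IsColexMinGen I R s ∧ cl I s = A := by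
  have hne : {t : Finset G | cl I t = A ∧ A \ R ⊆ t}.Nonempty :=
    ⟨A.toFinite.toFinset, by
      simp only [Set.mem_ofPred_eq, Set.Finite.coe_toFinset]; exact ⟨hA, Set.sdiff_subset⟩⟩
  obtain ⟨s, ⟨hsA, hsR⟩, hmin⟩ := Set.exists_min_image _ toColex (Set.toFinite _) hne
  subst hsA
  exact ⟨s, ⟨hsR, fun t ht htR => hmin t ⟨ht, htR⟩⟩, rfl⟩

theorem IsColexMinGen.filter_notMem {T : Set G} [DecidablePred (· ∈ T)]
    (hs : IsColexMinGen I R s) (hT : T ⊆ R) : IsColexMinGen I R (s.filter (· ∉ T)) := by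
  set u := s.filter (· ∉ T)
  set w := s.filter (· ∈ T)
  have hwu : w ∪ u = s := filter_union_filter_not_eq _ s
  have hus : cl I u ⊆ cl I s := cl_mono I (coe_subset.2 (filter_subset _ s))
  have hmem_u {x : G} (hx : x ∈ cl I s \ R) : x ∈ u :=
    mem_filter.2 ⟨hs.1 hx, fun hxT => hx.2 (hT hxT)⟩
  refine ⟨fun x hx => hmem_u ⟨hus hx.1, hx.2⟩, fun t htu hR => ?_⟩
  by_contra! hlt
  have hclt : cl I ↑(t ∪ w) = cl I s := by
    rw [← hwu, union_comm w, coe_union, coe_union, cl_union_congr_left I htu]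
  have hR' : cl I s \ R ⊆ ↑(t ∪ w) :=
    fun x hx => mem_union_left _ (hR ⟨subset_cl I _ (hmem_u hx), hx.2⟩)
  have hlt' : toColex (t ∪ w) < toColex s := by
    rw [← hwu, union_comm w]
    exact toColex_union_lt_toColex_union hlt (disjoint_filter_filter_not s s _).symm
  exact (hs.2 _ hclt hR').not_gt hlt'

end ColexMinGen

theorem statement17 {G M : Type*} [Fintype G] (I : G → M → Prop) (R : Set G) :
    ∃ 𝒮 : Set (Set G),
      (∀ S ∈ 𝒮, MixGen I R S) ∧
      Set.InjOn (cl I) 𝒮 ∧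
      (∀ A : Set G, IsExtent I A → ∃ S ∈ 𝒮, cl I S = A) ∧
      (∀ S ∈ 𝒮, ∀ T ⊆ R, S \ T ∈ 𝒮) := by
  classical
  let : LinearOrder G := LinearOrder.lift' _ (Fintype.equivFin G).injective
  refine ⟨(↑) '' {s : Finset G | IsColexMinGen I R s}, ?_, ?_, ?_, ?_⟩
  · rintro _ ⟨s, hs, rfl⟩
    exact hs.mixGen
  · rintro _ ⟨s, hs, rfl⟩ _ ⟨t, ht, rfl⟩ h
    exact congrArg _ (hs.eq_of_cl_eq ht h)
  · intro A hA
    obtain ⟨s, hs, hsA⟩ := exists_isColexMinGen R hA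
    exact ⟨s, ⟨s, hs, rfl⟩, hsA⟩
  · rintro _ ⟨s, hs, rfl⟩ T hT
    exact ⟨_, hs.filter_notMem hT, coe_filter _ s⟩
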